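/- Let P ⊂ ℝᵈ be a full-dimensional polytope with n vertices. The number of distinct combinatorial types of polytopes arising as intersections P ∩ H over all affine hyperplanes H ⊂ ℝᵈ is at most C·n^{2d+1}·2^d for some constant C depending only on d; in particular, for fixed d it is bounded by a polynomial in n. -/

import Mathlib

open RealInnerProductSpace

/-- Two sets are combinatorially equivalent if their posets of faces (extreme subsets,
ordered by inclusion) are order-isomorphic. -/
def CombEquiv {d : ℕ} (Q₁ Q₂ : Set (EuclideanSpace ℝ (Fin d))) : Prop :=
  Nonempty ({F : Set (EuclideanSpace ℝ (Fin d)) // IsExtreme ℝ Q₁ F} ≃o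
    {F : Set (EuclideanSpace ℝ (Fin d)) // IsExtreme ℝ Q₂ F})

/-!
Two hyperplanes `{ℓ = β}` and `{ℓ' = β'}` that put every vertex of `P = conv V` on
corresponding sides give combinatorially equivalent sections: each point of one section lies in
the relative interior of the same face of `P` as some point of the other, i.e. has the same
smallest face `minFace P x` (walk inside that face towards a vertex on the other side of the
second hyperplane), and this matching of points transports extreme subsets, which are exactly
the subsets closed under `x ↦ minFace P x`. Hence the number of types is at most the number of sign vectors
`(sign (ℓ v - β))_{v ∈ V}`, i.e. of cells of the central arrangement of the `n` hyperplanes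
`{(ℓ, β) | ℓ v = β}` in the `(d + 1)`-dimensional space of pairs `(ℓ, β)`; deletion and
restriction bound that number by `(3n + 1) ^ (d + 1)`.
-/

open Set Module

section MinFace

variable {E : Type*} [AddCommGroup E] [Module ℝ E] {A F V : Set E} {x y z w : E}
  {β β₁ β₂ : ℝ}

def minFace (A : Set E) (x : E) : Set E :=
  {y | y ∈ A ∧ ∃ z ∈ A, x ∈ openSegment ℝ y z}

lemma minFace_subset : minFace A x ⊆ A := fun _ hy => hy.1

lemma mem_minFace_self (hx : x ∈ A) : x ∈ minFace A x :=
  ⟨hx, x, hx, by simp [openSegment_same]⟩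

lemma IsExtreme.minFace_subset (hF : IsExtreme ℝ A F) (hx : x ∈ F) : minFace A x ⊆ F :=
  fun _ ⟨hyA, _, hzA, hxyz⟩ => hF.2 hyA hzA hx hxyz

lemma isExtreme_iff_minFace_subset :
    IsExtreme ℝ A F ↔ F ⊆ A ∧ ∀ x ∈ F, minFace A x ⊆ F :=
  ⟨fun hF => ⟨hF.1, fun _ hx => hF.minFace_subset hx⟩,
    fun ⟨hFA, hF⟩ => ⟨hFA, fun _ hy _ hz _ hx hxyz => hF _ hx ⟨hy, _, hz, hxyz⟩⟩⟩

lemma Convex.isExtreme_minFace (hA : Convex ℝ A) (x : E) : IsExtreme ℝ A (minFace A x) := by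
  refine ⟨minFace_subset, ?_⟩
  rintro y₁ hy₁ y₂ hy₂ y ⟨-, z, hzA, a, b, ha, hb, hab, rfl⟩ ⟨c, e, hc, he, hce, rfl⟩
  -- `x` is a convex combination of `y₁` (weight `a c`) and a point of `A` built from `y₂` and `z`
  have hac : a * c < 1 := by nlinarith
  have hμ : 0 < 1 - a * c := by linarith
  refine ⟨hy₁, (a * e / (1 - a * c)) • y₂ + (b / (1 - a * c)) • z, hA hy₂ hzA (by positivity)
    (by positivity) ?_, a * c, 1 - a * c, by positivity, hμ, by ring, ?_⟩
  · field_simp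
    linear_combination a * hce + hab
  · rw [smul_add, smul_smul, smul_smul, mul_div_cancel₀ _ hμ.ne', mul_div_cancel₀ _ hμ.ne']
    module

lemma Convex.minFace_subset_minFace (hA : Convex ℝ A) (hy : y ∈ minFace A x) :
    minFace A y ⊆ minFace A x :=
  (hA.isExtreme_minFace x).minFace_subset hy

lemma Convex.minFace_eq_minFace (hA : Convex ℝ A) (hy : y ∈ minFace A x) (hx : x ∈ minFace A y) :
    minFace A x = minFace A y :=
  (hA.minFace_subset_minFace hx).antisymm (hA.minFace_subset_minFace hy)

lemma Convex.minFace_eq_of_mem_openSegment (hA : Convex ℝ A) (hw : w ∈ minFace A x)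
    (hz : z ∈ openSegment ℝ x w) : minFace A z = minFace A x := by
  obtain ⟨hwA, v, hvA, a, b, ha, hb, hab, rfl⟩ := hw
  obtain ⟨c, e, hc, he, hce, rfl⟩ := hz
  have hxA : a • w + b • v ∈ A := hA hwA hvA ha.le hb.le hab
  have hzA : c • (a • w + b • v) + e • w ∈ A := hA hxA hwA hc.le he.le hce
  have hs : 0 < a + e * b := by positivity
  refine (hA.minFace_eq_minFace ⟨hzA, v, hvA, a / (a + e * b), 1 - a / (a + e * b),
      by positivity, ?_, by ring, ?_⟩ ⟨hxA, w, hwA, c, e, hc, he, hce, rfl⟩).symm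
  · rw [sub_pos, div_lt_one hs]
    nlinarith
  · match_scalars <;> field_simp
    · linear_combination a * hce - e * hab
    · linear_combination b * (a * hce - e * hab)

lemma minFace_inter_hyperplane (ℓ : E →ₗ[ℝ] ℝ) (hx : ℓ x = β) :
    minFace (A ∩ {w | ℓ w = β}) x = minFace A x ∩ {w | ℓ w = β} := by
  ext y
  refine ⟨fun ⟨⟨hyA, hyH⟩, z, ⟨hzA, _⟩, hxyz⟩ => ⟨⟨hyA, z, hzA, hxyz⟩, hyH⟩, ?_⟩
  rintro ⟨⟨hyA, z, hzA, a, b, ha, hb, hab, rfl⟩, hyH⟩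
  have hz : ℓ z = β := by
    simp only [map_add, map_smul, smul_eq_mul, show ℓ y = β from hyH] at hx
    exact mul_left_cancel₀ hb.ne' (by linear_combination hx - β * hab)
  exact ⟨⟨hyA, hyH⟩, z, ⟨hzA, hz⟩, a, b, ha, hb, hab, rfl⟩

lemma IsExtreme.mem_of_mem_minFace {ℓ : E →ₗ[ℝ] ℝ} (hF : IsExtreme ℝ (A ∩ {w | ℓ w = β}) F)
    (hx : x ∈ F) (hy : y ∈ minFace A x) (hyβ : ℓ y = β) : y ∈ F :=
  hF.minFace_subset hx <| by
    rw [minFace_inter_hyperplane ℓ (hF.1 hx).2]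
    exact ⟨hy, hyβ⟩

lemma mem_convexHull_inter_minFace (hz : z ∈ convexHull ℝ V) :
    z ∈ convexHull ℝ (V ∩ minFace (convexHull ℝ V) z) := by
  set P := convexHull ℝ V
  have hP : Convex ℝ P := convex_convexHull ℝ V
  suffices P ⊆ {w | w ∈ P ∧ w ∈ convexHull ℝ (V ∩ minFace P w)} from (this hz).2
  refine convexHull_min (fun v hv => ⟨subset_convexHull ℝ V hv,
    subset_convexHull ℝ _ ⟨hv, mem_minFace_self (subset_convexHull ℝ V hv)⟩⟩) ?_
  rw [convex_iff_openSegment_subset]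
  rintro z₁ ⟨hz₁P, hz₁⟩ z₂ ⟨hz₂P, hz₂⟩ w hw
  have hmono : ∀ y ∈ minFace P w,
      convexHull ℝ (V ∩ minFace P y) ⊆ convexHull ℝ (V ∩ minFace P w) := fun y hy =>
    convexHull_mono (inter_subset_inter_right _ (hP.minFace_subset_minFace hy))
  refine ⟨hP.openSegment_subset hz₁P hz₂P hw, (convex_convexHull ℝ _).openSegment_subset
    (hmono z₁ ⟨hz₁P, z₂, hz₂P, hw⟩ hz₁) (hmono z₂ ⟨hz₂P, z₁, hz₁P, ?_⟩ hz₂) hw⟩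
  rwa [openSegment_symm]

lemma exists_mem_minFace_lt (ℓ : E →ₗ[ℝ] ℝ) (hz : z ∈ convexHull ℝ V) (h : β < ℓ z) :
    ∃ v ∈ V, v ∈ minFace (convexHull ℝ V) z ∧ β < ℓ v := by
  by_contra! hle
  exact not_lt.2 (convexHull_min (fun v hv => hle v hv.1 hv.2)
    (convex_halfSpace_le ℓ.isLinear β) (mem_convexHull_inter_minFace hz)) h

lemma exists_minFace_eq_of_sign_eq_of_lt (ℓ₁ ℓ₂ : E →ₗ[ℝ] ℝ)
    (hsign : ∀ v ∈ V, SignType.sign (ℓ₁ v - β₁) = SignType.sign (ℓ₂ v - β₂))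
    (hx : x ∈ convexHull ℝ V) (hx₁ : ℓ₁ x = β₁) (hx₂ : β₂ < ℓ₂ x) :
    ∃ z ∈ convexHull ℝ V, ℓ₂ z = β₂ ∧
      minFace (convexHull ℝ V) z = minFace (convexHull ℝ V) x := by
  set P := convexHull ℝ V
  have hP : Convex ℝ P := convex_convexHull ℝ V
  have hpos : ∀ v ∈ V, β₂ < ℓ₂ v → β₁ < ℓ₁ v := fun v hv h => by
    simpa using sign_eq_one_iff.1 ((hsign v hv).trans (sign_eq_one_iff.2 (sub_pos.2 h)))
  have hneg : ∀ v ∈ V, ℓ₁ v < β₁ → ℓ₂ v < β₂ := fun v hv h => by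
    simpa using
      sign_eq_neg_one_iff.1 ((hsign v hv).symm.trans (sign_eq_neg_one_iff.2 (sub_neg.2 h)))
  -- a vertex `v` of the face of `x` above the second hyperplane lies above the first one, so the
  -- point `y` of that face opposite to `v` through `x` lies below the first one
  obtain ⟨v, hvV, ⟨hvP, y, hyP, a, b, ha, hb, hab, hvy⟩, hv₂⟩ := exists_mem_minFace_lt ℓ₂ hx hx₂
  have hy₁ : ℓ₁ y < β₁ := by
    have h := congrArg ℓ₁ hvy
    simp only [map_add, map_smul, smul_eq_mul, hx₁] at h
    by_contra! hy
    have hβ : a * β₁ + b * β₁ = β₁ := by linear_combination β₁ * hab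
    linarith [mul_lt_mul_of_pos_left (hpos v hvV hv₂) ha, mul_le_mul_of_nonneg_left hy hb.le]
  have hy : y ∈ minFace P x :=
    ⟨hyP, v, hvP, by rw [openSegment_symm]; exact ⟨a, b, ha, hb, hab, hvy⟩⟩
  obtain ⟨w, hwV, hw, hw₁⟩ := exists_mem_minFace_lt (-ℓ₁) (β := -β₁) hyP (by simpa using hy₁)
  have hwx : w ∈ minFace P x := hP.minFace_subset_minFace hy hw
  have hw₂ : ℓ₂ w < β₂ := hneg w hwV (by simpa using hw₁)
  obtain ⟨z, hz, hz₂⟩ : ∃ z ∈ openSegment ℝ x w, ℓ₂ z = β₂ := by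
    have : β₂ ∈ openSegment ℝ (ℓ₂ x) (ℓ₂ w) := by
      rw [openSegment_eq_Ioo' (by linarith)]
      exact ⟨by simp [hw₂], by simp [hx₂]⟩
    rwa [← LinearMap.coe_toAffineMap ℓ₂, ← image_openSegment] at this
  exact ⟨z, hP.openSegment_subset hx (minFace_subset hwx) hz, hz₂,
    hP.minFace_eq_of_mem_openSegment hwx hz⟩

lemma exists_minFace_eq_of_sign_eq (ℓ₁ ℓ₂ : E →ₗ[ℝ] ℝ)
    (hsign : ∀ v ∈ V, SignType.sign (ℓ₁ v - β₁) = SignType.sign (ℓ₂ v - β₂))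
    (hx : x ∈ convexHull ℝ V ∩ {w | ℓ₁ w = β₁}) :
    ∃ z ∈ convexHull ℝ V ∩ {w | ℓ₂ w = β₂},
      minFace (convexHull ℝ V) z = minFace (convexHull ℝ V) x := by
  obtain ⟨hx, hx₁ : ℓ₁ x = β₁⟩ := hx
  rcases lt_trichotomy (ℓ₂ x) β₂ with h | h | h
  · have hsign' : ∀ v ∈ V,
        SignType.sign ((-ℓ₁) v - -β₁) = SignType.sign ((-ℓ₂) v - -β₂) := fun v hv => by
      simp only [LinearMap.neg_apply, neg_sub_neg]
      rw [← neg_sub, Left.sign_neg, hsign v hv, ← Left.sign_neg, neg_sub]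
    obtain ⟨z, hz, hz₂, hzx⟩ := exists_minFace_eq_of_sign_eq_of_lt (-ℓ₁) (-ℓ₂) hsign' hx
      (by simp [hx₁]) (by simpa using h)
    exact ⟨z, ⟨hz, by simpa using hz₂⟩, hzx⟩
  · exact ⟨x, ⟨hx, h⟩, rfl⟩
  · obtain ⟨z, hz, hz₂, hzx⟩ := exists_minFace_eq_of_sign_eq_of_lt ℓ₁ ℓ₂ hsign hx hx₁ h
    exact ⟨z, ⟨hz, hz₂⟩, hzx⟩

end MinFace

section FaceTransfer

variable {E : Type*} [AddCommGroup E] [Module ℝ E] {A F F' S : Set E}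
  {ℓ₁ ℓ₂ : E →ₗ[ℝ] ℝ} {β₁ β₂ : ℝ}

def faceTransfer (A S F : Set E) : Set E :=
  {y ∈ S | ∃ x ∈ F, minFace A x = minFace A y}

lemma faceTransfer_mono (h : F ⊆ F') : faceTransfer A S F ⊆ faceTransfer A S F' :=
  fun _ ⟨hy, x, hx, hxy⟩ => ⟨hy, x, h hx, hxy⟩

lemma Convex.isExtreme_faceTransfer (hA : Convex ℝ A)
    (h₂₁ : ∀ y ∈ A ∩ {w | ℓ₂ w = β₂}, ∃ x ∈ A ∩ {w | ℓ₁ w = β₁}, minFace A x = minFace A y)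
    (hF : IsExtreme ℝ (A ∩ {w | ℓ₁ w = β₁}) F) :
    IsExtreme ℝ (A ∩ {w | ℓ₂ w = β₂}) (faceTransfer A (A ∩ {w | ℓ₂ w = β₂}) F) := by
  refine isExtreme_iff_minFace_subset.2 ⟨fun y hy => hy.1, ?_⟩
  rintro y ⟨⟨-, hyβ⟩, x, hxF, hxy⟩ y' hy'
  rw [minFace_inter_hyperplane ℓ₂ hyβ] at hy'
  obtain ⟨x', ⟨hx'A, hx'β⟩, hx'y'⟩ := h₂₁ y' ⟨minFace_subset hy'.1, hy'.2⟩
  have hx'x : x' ∈ minFace A x :=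
    hxy ▸ hA.minFace_subset_minFace hy'.1 (hx'y' ▸ mem_minFace_self hx'A)
  exact ⟨⟨minFace_subset hy'.1, hy'.2⟩, x', hF.mem_of_mem_minFace hxF hx'x hx'β, hx'y'⟩

lemma faceTransfer_faceTransfer
    (h₁₂ : ∀ x ∈ A ∩ {w | ℓ₁ w = β₁}, ∃ y ∈ A ∩ {w | ℓ₂ w = β₂}, minFace A y = minFace A x)
    (hF : IsExtreme ℝ (A ∩ {w | ℓ₁ w = β₁}) F) :
    faceTransfer A (A ∩ {w | ℓ₁ w = β₁}) (faceTransfer A (A ∩ {w | ℓ₂ w = β₂}) F) = F := by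
  ext x'
  refine ⟨?_, fun hx' => ?_⟩
  · rintro ⟨⟨hx'A, hx'β⟩, y, ⟨-, x, hxF, hxy⟩, hyx'⟩
    exact hF.mem_of_mem_minFace hxF (hxy ▸ hyx' ▸ mem_minFace_self hx'A) hx'β
  · obtain ⟨y, hy, hyx'⟩ := h₁₂ x' (hF.1 hx')
    exact ⟨hF.1 hx', y, ⟨hy, x', hx', hyx'.symm⟩, hyx'⟩

lemma Convex.nonempty_orderIso_isExtreme_inter (hA : Convex ℝ A)
    (h₁₂ : ∀ x ∈ A ∩ {w | ℓ₁ w = β₁}, ∃ y ∈ A ∩ {w | ℓ₂ w = β₂}, minFace A y = minFace A x)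
    (h₂₁ : ∀ y ∈ A ∩ {w | ℓ₂ w = β₂}, ∃ x ∈ A ∩ {w | ℓ₁ w = β₁}, minFace A x = minFace A y) :
    Nonempty ({F : Set E // IsExtreme ℝ (A ∩ {w | ℓ₁ w = β₁}) F} ≃o
      {F : Set E // IsExtreme ℝ (A ∩ {w | ℓ₂ w = β₂}) F}) :=
  ⟨Equiv.toOrderIso
    { toFun := fun F => ⟨_, hA.isExtreme_faceTransfer h₂₁ F.2⟩
      invFun := fun G => ⟨_, hA.isExtreme_faceTransfer h₁₂ G.2⟩
      left_inv := fun F => Subtype.ext (faceTransfer_faceTransfer h₁₂ F.2)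
      right_inv := fun G => Subtype.ext (faceTransfer_faceTransfer h₂₁ G.2) }
    (fun _ _ h => faceTransfer_mono h) (fun _ _ h => faceTransfer_mono h)⟩

end FaceTransfer

lemma sign_mul_add_mul_of_sign_eq {x y c e : ℝ} (hc : 0 < c) (he : 0 < e)
    (h : SignType.sign x = SignType.sign y) : SignType.sign (c * x + e * y) = SignType.sign x := by
  rcases lt_trichotomy x 0 with hx | rfl | hx
  · have hy : y < 0 := sign_eq_neg_one_iff.1 (h ▸ sign_neg hx)
    rw [sign_neg hx, sign_neg (by nlinarith)]
  · simp [sign_eq_zero_iff.1 (h.symm.trans sign_zero)]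
  · have hy : 0 < y := sign_eq_one_iff.1 (h ▸ sign_pos hx)
    rw [sign_pos hx, sign_pos (by nlinarith)]

section SignPattern

variable {M ι : Type*} [AddCommGroup M] [Module ℝ M] [DecidableEq ι] (f : ι → M →ₗ[ℝ] ℝ)
  {A : Finset ι} {a : ι} {T : Submodule ℝ M} {m₁ m₂ : M}

noncomputable def signPattern (A : Finset ι) (m : M) : ι → SignType :=
  fun i => if i ∈ A then SignType.sign (f i m) else 0

def signPatterns (A : Finset ι) (T : Submodule ℝ M) : Set (ι → SignType) :=
  signPattern f A '' T

lemma signPattern_insert (ha : a ∉ A) (m : M) :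
    signPattern f (insert a A) m =
      Function.update (signPattern f A m) a (SignType.sign (f a m)) := by
  ext i
  by_cases hi : i = a
  · subst hi; simp [signPattern]
  · simp [signPattern, hi]

lemma update_signPattern_insert (ha : a ∉ A) (m : M) :
    Function.update (signPattern f (insert a A) m) a 0 = signPattern f A m := by
  rw [signPattern_insert f ha, Function.update_idem]
  exact Function.update_eq_self_iff.2 (by simp [signPattern, ha])

lemma exists_mem_ker_signPattern_eq (hm₁ : m₁ ∈ T) (hm₂ : m₂ ∈ T) (hmul : f a m₁ * f a m₂ < 0)
    (h : signPattern f A m₁ = signPattern f A m₂) :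
    ∃ m ∈ T ⊓ LinearMap.ker (f a), signPattern f A m = signPattern f A m₁ := by
  have hc : 0 < |f a m₂| := abs_pos.2 (right_ne_zero_of_mul hmul.ne)
  have he : 0 < |f a m₁| := abs_pos.2 (left_ne_zero_of_mul hmul.ne)
  -- `f a` has opposite signs at `m₁` and `m₂`, so it vanishes on this positive combination
  refine ⟨|f a m₂| • m₁ + |f a m₁| • m₂, ⟨T.add_mem (T.smul_mem _ hm₁) (T.smul_mem _ hm₂), ?_⟩, ?_⟩
  · rw [SetLike.mem_coe, LinearMap.mem_ker, map_add, map_smul, map_smul, smul_eq_mul, smul_eq_mul]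
    rcases mul_neg_iff.1 hmul with ⟨h₁, h₂⟩ | ⟨h₁, h₂⟩
    · rw [abs_of_pos h₁, abs_of_neg h₂]; ring
    · rw [abs_of_neg h₁, abs_of_pos h₂]; ring
  · ext i
    have hi := congrFun h i
    simp only [signPattern, map_add, map_smul, smul_eq_mul] at hi ⊢
    split_ifs at hi ⊢
    · exact sign_mul_add_mul_of_sign_eq hc he hi
    · rfl

lemma signPattern_mem_signPatterns_ker (ha : a ∉ A) (hm₁ : m₁ ∈ T) (hm₂ : m₂ ∈ T)
    (hne : signPattern f (insert a A) m₁ ≠ signPattern f (insert a A) m₂)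
    (h : signPattern f A m₁ = signPattern f A m₂) :
    signPattern f A m₁ ∈ signPatterns f A (T ⊓ LinearMap.ker (f a)) := by
  by_cases h₁ : f a m₁ = 0
  · exact ⟨m₁, ⟨hm₁, h₁⟩, rfl⟩
  by_cases h₂ : f a m₂ = 0
  · exact ⟨m₂, ⟨hm₂, h₂⟩, h.symm⟩
  have hmul : f a m₁ * f a m₂ < 0 := by
    rw [signPattern_insert f ha, signPattern_insert f ha, h] at hne
    rcases lt_or_gt_of_ne h₁ with h₁ | h₁ <;> rcases lt_or_gt_of_ne h₂ with h₂ | h₂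
    · simp [sign_neg h₁, sign_neg h₂] at hne
    · exact mul_neg_of_neg_of_pos h₁ h₂
    · exact mul_neg_of_pos_of_neg h₁ h₂
    · simp [sign_pos h₁, sign_pos h₂] at hne
  exact exists_mem_ker_signPattern_eq f hm₁ hm₂ hmul h

lemma encard_signPatterns_insert_le (ha : a ∉ A) :
    (signPatterns f (insert a A) T).encard ≤
      (signPatterns f A T).encard + 3 * (signPatterns f A (T ⊓ LinearMap.ker (f a))).encard := by
  set N := signPatterns f (insert a A) T
  set K := signPatterns f A (T ⊓ LinearMap.ker (f a))
  set N₁ := {g ∈ N | Function.update g a 0 ∉ K}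
  set extend := fun p : (ι → SignType) × SignType => Function.update p.1 a p.2
  -- patterns whose restriction to `A` is not realised on the kernel have no other extension in `N`
  have hinj : InjOn (Function.update · a 0) N₁ := by
    rintro _ ⟨⟨m₁, hm₁, rfl⟩, hK⟩ _ ⟨⟨m₂, hm₂, rfl⟩, -⟩ h
    simp only [update_signPattern_insert f ha] at h hK
    by_contra hne
    exact hK (signPattern_mem_signPatterns_ker f ha hm₁ hm₂ hne h)
  have hmaps : MapsTo (Function.update · a 0) N₁ (signPatterns f A T) := by
    rintro _ ⟨⟨m, hm, rfl⟩, -⟩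
    exact ⟨m, hm, (update_signPattern_insert f ha m).symm⟩
  have hcover : N ⊆ N₁ ∪ extend '' (K ×ˢ univ) := by
    intro g hg
    by_cases hgK : Function.update g a 0 ∈ K
    · refine Or.inr ⟨(Function.update g a 0, g a), ⟨hgK, mem_univ _⟩, ?_⟩
      simp only [extend, Function.update_idem, Function.update_eq_self]
    · exact Or.inl ⟨hg, hgK⟩
  calc N.encard
      ≤ N₁.encard + (extend '' (K ×ˢ univ)).encard :=
        (encard_le_encard hcover).trans (encard_union_le _ _)
    _ ≤ (signPatterns f A T).encard + (K ×ˢ (univ : Set SignType)).encard :=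
        add_le_add (encard_le_encard_of_injOn hmaps hinj) (encard_image_le _ _)
    _ = (signPatterns f A T).encard + 3 * K.encard := by
        rw [encard_prod, encard_univ, ENat.card_eq_coe_fintype_card, mul_comm]; rfl

lemma encard_signPatterns_le [FiniteDimensional ℝ M] (A : Finset ι) (T : Submodule ℝ M) :
    (signPatterns f A T).encard ≤ ((3 * A.card + 1) ^ finrank ℝ T : ℕ) := by
  induction A using Finset.induction_on generalizing T with
  | empty =>
    have h : signPatterns f ∅ T ⊆ {0} := by
      rintro _ ⟨m, -, rfl⟩
      ext i
      simp [signPattern]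
    simpa using encard_le_encard h
  | @insert a A ha ih =>
    rw [Finset.card_insert_of_notMem ha]
    by_cases hker : ∀ m ∈ T, f a m = 0
    · have h : signPatterns f (insert a A) T = signPatterns f A T :=
        image_congr fun m hm => by rw [signPattern_insert f ha, hker m hm, sign_zero,
          Function.update_eq_self_iff.2 (by simp [signPattern, ha])]
      rw [h]
      exact (ih T).trans (Nat.cast_le.2 (Nat.pow_le_pow_left (by omega) _))
    · simp only [not_forall] at hker
      obtain ⟨m₀, hm₀, hm₀a⟩ := hker
      have hlt : finrank ℝ ↥(T ⊓ LinearMap.ker (f a)) < finrank ℝ T :=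
        Submodule.finrank_lt_finrank_of_lt <| inf_le_left.lt_of_ne fun h =>
          hm₀a ((SetLike.ext_iff.1 h m₀).2 hm₀).2
      obtain ⟨k, hk⟩ : ∃ k, finrank ℝ T = k + 1 := ⟨_, (Nat.succ_pred_eq_of_pos (by omega)).symm⟩
      have hK := (ih (T ⊓ LinearMap.ker (f a))).trans
        (Nat.cast_le.2 (Nat.pow_le_pow_right (by omega) (show _ ≤ k by omega)))
      have hT := ih T
      rw [hk] at hT ⊢
      calc _ ≤ _ := encard_signPatterns_insert_le f ha
        _ ≤ ((3 * A.card + 1) ^ (k + 1) : ℕ) + 3 * ((3 * A.card + 1) ^ k : ℕ) := by gcongr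
        _ ≤ ((3 * (A.card + 1) + 1) ^ (k + 1) : ℕ) := by
          norm_cast
          calc (3 * A.card + 1) ^ (k + 1) + 3 * (3 * A.card + 1) ^ k
              = (3 * A.card + 1) ^ k * (3 * (A.card + 1) + 1) := by ring
            _ ≤ (3 * (A.card + 1) + 1) ^ k * (3 * (A.card + 1) + 1) := by gcongr; omega
            _ = (3 * (A.card + 1) + 1) ^ (k + 1) := by ring

end SignPattern

section SectionTypes

variable {E : Type*} [AddCommGroup E] [Module ℝ E]

lemma nonempty_orderIso_isExtreme_convexHull_inter_of_sign_eq {V : Set E} {β₁ β₂ : ℝ}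
    (ℓ₁ ℓ₂ : E →ₗ[ℝ] ℝ)
    (hsign : ∀ v ∈ V, SignType.sign (ℓ₁ v - β₁) = SignType.sign (ℓ₂ v - β₂)) :
    Nonempty ({F : Set E // IsExtreme ℝ (convexHull ℝ V ∩ {w | ℓ₁ w = β₁}) F} ≃o
      {F : Set E // IsExtreme ℝ (convexHull ℝ V ∩ {w | ℓ₂ w = β₂}) F}) :=
  (convex_convexHull ℝ V).nonempty_orderIso_isExtreme_inter
    (fun _ hx => exists_minFace_eq_of_sign_eq ℓ₁ ℓ₂ hsign hx)
    (fun _ hy => exists_minFace_eq_of_sign_eq ℓ₂ ℓ₁ (fun v hv => (hsign v hv).symm) hy)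

noncomputable def evalFstSubSnd (v : E) : (Dual ℝ E × ℝ) →ₗ[ℝ] ℝ :=
  (Dual.eval ℝ E v).comp (LinearMap.fst ℝ _ ℝ) - LinearMap.snd ℝ _ ℝ

theorem exists_encard_le_forall_section_orderIso [FiniteDimensional ℝ E] (V : Finset E) :
    ∃ L : Set (Set E), L.encard ≤ ((3 * V.card + 1) ^ (finrank ℝ E + 1) : ℕ) ∧
      ∀ (ℓ : E →ₗ[ℝ] ℝ) (β : ℝ), ∃ Q ∈ L,
        Nonempty ({F : Set E // IsExtreme ℝ (convexHull ℝ (V : Set E) ∩ {x | ℓ x = β}) F} ≃o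
          {F : Set E // IsExtreme ℝ Q F}) := by
  classical
  set pattern := signPattern evalFstSubSnd V
  obtain ⟨X, hXimage, hXinj⟩ := exists_image_eq_and_injOn univ pattern
  refine ⟨(fun p : Dual ℝ E × ℝ => convexHull ℝ (V : Set E) ∩ {x | p.1 x = p.2}) '' X, ?_,
    fun ℓ β => ?_⟩
  · have hrank : finrank ℝ (⊤ : Submodule ℝ (Dual ℝ E × ℝ)) = finrank ℝ E + 1 := by
      rw [finrank_top, finrank_prod, Subspace.dual_finrank_eq, finrank_self]
    calc _ ≤ X.encard := encard_image_le _ _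
      _ = (signPatterns evalFstSubSnd V ⊤).encard := by
        rw [← hXinj.encard_image, hXimage, signPatterns, Submodule.top_coe]
      _ ≤ _ := hrank ▸ encard_signPatterns_le evalFstSubSnd V ⊤
  · obtain ⟨q, hqX, hq⟩ : pattern (ℓ, β) ∈ pattern '' X := hXimage ▸ mem_image_of_mem _ (mem_univ _)
    refine ⟨_, mem_image_of_mem _ hqX,
      nonempty_orderIso_isExtreme_convexHull_inter_of_sign_eq ℓ q.1 fun v hv => ?_⟩
    simpa [pattern, signPattern, evalFstSubSnd, Finset.mem_coe.1 hv] using (congrFun hq v).symm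

end SectionTypes

/-- For every dimension `d` there is a constant `C` such that any full-dimensional polytope
`P ⊆ ℝᵈ` with `n` vertices has at most `C·n^{2d+1}·2^d` combinatorial types of affine
hyperplane sections `P ∩ H`. -/
theorem card_combinatorial_types_of_sections_le (d : ℕ) :
    ∃ C : ℕ, ∀ (V : Finset (EuclideanSpace ℝ (Fin d))) (P : Set (EuclideanSpace ℝ (Fin d))),
      P = convexHull ℝ (V : Set (EuclideanSpace ℝ (Fin d))) →
      Set.extremePoints ℝ P = (V : Set (EuclideanSpace ℝ (Fin d))) →
      (interior P).Nonempty →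
      ∃ L : Set (Set (EuclideanSpace ℝ (Fin d))),
        L.Finite ∧ L.ncard ≤ C * V.card ^ (2 * d + 1) * 2 ^ d ∧
        ∀ (u : EuclideanSpace ℝ (Fin d)) (β : ℝ), u ≠ 0 →
          ∃ Q ∈ L, CombEquiv (P ∩ {x | ⟪u, x⟫ = β}) Q := by
  refine ⟨4 ^ (d + 1), fun V P hP _ hint => ?_⟩
  subst hP
  have hV : 1 ≤ V.card := Finset.card_pos.2 <| Finset.nonempty_iff_ne_empty.2 <| by
    rintro rfl
    simp at hint
  obtain ⟨L, hL, hsections⟩ := exists_encard_le_forall_section_orderIso V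
  rw [finrank_euclideanSpace_fin] at hL
  obtain ⟨hLfinite, hLcard⟩ := encard_le_coe_iff_finite_ncard_le.1 hL
  refine ⟨L, hLfinite, hLcard.trans ?_, fun u β _ => hsections (innerₗ _ u) β⟩
  calc (3 * V.card + 1) ^ (d + 1)
      ≤ (4 * V.card) ^ (d + 1) := by gcongr; omega
    _ = 4 ^ (d + 1) * V.card ^ (d + 1) := mul_pow _ _ _
    _ ≤ 4 ^ (d + 1) * V.card ^ (2 * d + 1) * 2 ^ d := by
      rw [mul_assoc]
      gcongr
      exact (Nat.pow_le_pow_right hV (by omega)).trans (Nat.le_mul_of_pos_right _ (by positivity))
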